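/- For Hermitian matrices V and A with A diagonalized as A = U diag(y) U^H, the minimization of ‖V − A‖_F^2 over PSD matrices V with Tr(V) ≤ P reduces, via unitary invariance of the Frobenius norm, to minimizing Σ_i (x_i − y_i)^2 over x_i ≥ 0 with Σ_i x_i ≤ P, where x_i are the eigenvalues of V in the basis U; i.e., the minimum of the matrix problem equals the minimum of the vector problem. -/

import Mathlib

open Matrix ComplexOrder

noncomputable def frobSq {n m : ℕ} (M : Matrix (Fin n) (Fin m) ℂ) : ℝ :=
  ∑ i, ∑ j, ‖M i j‖ ^ 2

lemma star_mul_self_re (z : ℂ) : (star z * z).re = ‖z‖ ^ 2 := by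
  rw [RCLike.star_def, mul_comm, Complex.mul_conj']
  norm_cast

lemma frobSq_eq_trace {n : ℕ} (M : Matrix (Fin n) (Fin n) ℂ) :
    frobSq M = (Matrix.trace (Mᴴ * M)).re := by
  simp only [frobSq, Matrix.trace, Matrix.diag, Matrix.mul_apply,
    Matrix.conjTranspose_apply, Complex.re_sum]
  rw [Finset.sum_comm]
  exact Finset.sum_congr rfl fun j _ => Finset.sum_congr rfl fun i _ =>
    (star_mul_self_re (M i j)).symm

lemma frobSq_unitary_conj {n : ℕ} (U M : Matrix (Fin n) (Fin n) ℂ)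
    (hU : U ∈ Matrix.unitaryGroup (Fin n) ℂ) :
    frobSq (U * M * Uᴴ) = frobSq M := by
  have h1 : Uᴴ * U = 1 := hU.1
  rw [frobSq_eq_trace, frobSq_eq_trace]
  have : (U * M * Uᴴ)ᴴ * (U * M * Uᴴ) = U * (Mᴴ * M) * Uᴴ := by
    calc (U * M * Uᴴ)ᴴ * (U * M * Uᴴ) = U * (Mᴴ * ((Uᴴ * U) * (M * Uᴴ))) := by
          simp [Matrix.conjTranspose_mul, Matrix.mul_assoc]
      _ = U * (Mᴴ * M) * Uᴴ := by rw [h1]; simp [Matrix.mul_assoc]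
  rw [this, Matrix.trace_mul_cycle, ← Matrix.mul_assoc, h1, Matrix.one_mul]

lemma frobSq_diagonal {n : ℕ} (d : Fin n → ℂ) :
    frobSq (Matrix.diagonal d) = ∑ i, ‖d i‖ ^ 2 := by
  unfold frobSq
  refine Finset.sum_congr rfl fun i _ => ?_
  rw [Finset.sum_eq_single i]
  · simp
  · intro j _ hj
    simp [Matrix.diagonal_apply_ne' _ hj]
  · simp

lemma re_sq_le_norm_sq (z : ℂ) : z.re ^ 2 ≤ ‖z‖ ^ 2 := by
  rw [Complex.sq_norm, Complex.normSq_apply]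
  nlinarith [sq_nonneg z.im]

/-- By unitary invariance of the Frobenius norm, minimizing `‖V − A‖_F²` over
PSD matrices `V` with `Tr V ≤ P`, for `A = U diag(y) Uᴴ`, reduces to
minimizing `∑ (x_i − y_i)²` over `x_i ≥ 0` with `∑ x_i ≤ P`:
the two problems have the same minimum value. -/
theorem stmt5 (n : ℕ) (A U : Matrix (Fin n) (Fin n) ℂ)
    (hU : U ∈ Matrix.unitaryGroup (Fin n) ℂ) (y : Fin n → ℝ) (P : ℝ) (hP : 0 < P)
    (hA : A = U * Matrix.diagonal (fun i => (y i : ℂ)) * Uᴴ) :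
    sInf {r : ℝ | ∃ V : Matrix (Fin n) (Fin n) ℂ,
        V.PosSemidef ∧ (V.trace).re ≤ P ∧ r = frobSq (V - A)} =
    sInf {r : ℝ | ∃ x : Fin n → ℝ,
        (∀ i, 0 ≤ x i) ∧ (∑ i, x i) ≤ P ∧ r = ∑ i, (x i - y i) ^ 2} := by
  have hUU : Uᴴ * U = 1 := hU.1
  have hUU' : U * Uᴴ = 1 := hU.2
  set M := {r : ℝ | ∃ V : Matrix (Fin n) (Fin n) ℂ,
        V.PosSemidef ∧ (V.trace).re ≤ P ∧ r = frobSq (V - A)} with hM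
  set Vec := {r : ℝ | ∃ x : Fin n → ℝ,
        (∀ i, 0 ≤ x i) ∧ (∑ i, x i) ≤ P ∧ r = ∑ i, (x i - y i) ^ 2} with hVec
  have bddM : BddBelow M := ⟨0, fun r ⟨V, _, _, hr⟩ => by
    rw [hr]; exact Finset.sum_nonneg fun i _ => Finset.sum_nonneg fun j _ => sq_nonneg _⟩
  have bddVec : BddBelow Vec := ⟨0, fun r ⟨x, _, _, hr⟩ => by
    rw [hr]; exact Finset.sum_nonneg fun i _ => sq_nonneg _⟩
  have neM : M.Nonempty := ⟨frobSq (0 - A), 0, Matrix.PosSemidef.zero, by simp [hP.le], rfl⟩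
  have neVec : Vec.Nonempty := ⟨∑ i, ((0:ℝ) - y i) ^ 2, fun _ => 0, fun _ => le_rfl,
    by simp [hP.le], rfl⟩
  -- every vector value is a matrix value
  have hsub : Vec ⊆ M := by
    rintro r ⟨x, hx, hsum, rfl⟩
    refine ⟨U * Matrix.diagonal (fun i => (x i : ℂ)) * Uᴴ, ?_, ?_, ?_⟩
    · exact (Matrix.posSemidef_diagonal_iff.mpr fun i =>
        Complex.zero_le_real.mpr (hx i)).mul_mul_conjTranspose_same U
    · rw [Matrix.trace_mul_cycle, hUU, Matrix.one_mul, Matrix.trace_diagonal]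
      rw [Complex.re_sum]
      simpa using hsum
    · rw [hA]
      have : U * Matrix.diagonal (fun i => (x i : ℂ)) * Uᴴ -
          U * Matrix.diagonal (fun i => (y i : ℂ)) * Uᴴ =
          U * Matrix.diagonal (fun i => ((x i - y i : ℝ) : ℂ)) * Uᴴ := by
        rw [← Matrix.sub_mul, ← Matrix.mul_sub]
        congr 1
        congr 1
        ext i j
        by_cases h : i = j <;> simp [h, Matrix.diagonal_apply]
      rw [this, frobSq_unitary_conj _ _ hU, frobSq_diagonal]
      refine Finset.sum_congr rfl fun i _ => ?_
      rw [Complex.norm_real]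
      exact (sq_abs _).symm
  refine le_antisymm (csInf_le_csInf bddM neVec hsub) (le_csInf neM ?_)
  rintro r ⟨V, hV, htr, rfl⟩
  set W := Uᴴ * V * U with hWdef
  have hW : W.PosSemidef := hV.conjTranspose_mul_mul_same U
  set x : Fin n → ℝ := fun i => (W i i).re with hxdef
  have hdiag : ∀ i, (0:ℂ) ≤ W i i := fun i => hW.diag_nonneg
  have hx : ∀ i, 0 ≤ x i := fun i => (Complex.le_def.mp (hdiag i)).1
  have hsum : ∑ i, x i ≤ P := by
    have : W.trace = V.trace := by
      rw [hWdef, Matrix.trace_mul_cycle, hUU', Matrix.one_mul]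
    calc ∑ i, x i = (W.trace).re := by rw [Matrix.trace, Complex.re_sum]; rfl
      _ = (V.trace).re := by rw [this]
      _ ≤ P := htr
  have hVW : V = U * W * Uᴴ := by
    rw [hWdef, ← Matrix.mul_assoc, ← Matrix.mul_assoc, hUU', Matrix.one_mul,
      Matrix.mul_assoc, hUU', Matrix.mul_one]
  have key : ∑ i, (x i - y i) ^ 2 ≤ frobSq (V - A) := by
    have hVA : V - A = U * (W - Matrix.diagonal (fun i => (y i : ℂ))) * Uᴴ := by
      rw [hA, hVW, ← Matrix.sub_mul, ← Matrix.mul_sub]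
    rw [hVA, frobSq_unitary_conj _ _ hU]
    unfold frobSq
    refine Finset.sum_le_sum fun i _ => ?_
    have h1 : ‖(W - Matrix.diagonal (fun i => (y i : ℂ))) i i‖ ^ 2 ≤
        ∑ j, ‖(W - Matrix.diagonal (fun i => (y i : ℂ))) i j‖ ^ 2 :=
      Finset.single_le_sum (f := fun j => ‖(W - Matrix.diagonal fun i => ((y i : ℂ))) i j‖ ^ 2)
        (fun j _ => sq_nonneg _) (Finset.mem_univ i)
    refine le_trans ?_ h1
    have h2 : ((W - Matrix.diagonal (fun i => (y i : ℂ))) i i).re = x i - y i := by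
      simp [Matrix.sub_apply, Matrix.diagonal_apply_eq, hxdef]
    calc (x i - y i) ^ 2 = ((W - Matrix.diagonal (fun i => (y i : ℂ))) i i).re ^ 2 := by
          rw [h2]
      _ ≤ _ := re_sq_le_norm_sq _
  exact le_trans (csInf_le bddVec ⟨x, hx, hsum, rfl⟩) key
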